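/- arXiv:1306.6492 — 6 statements merged into one kernel-verified Lean document; each statement's English description precedes it below -/
import Mathlib

section
/- Let E₁, E₂, Z be Hausdorff topological vector spaces, K ⊆ E₁ and D ⊆ E₂ subsets, and C a convex cone in Z. Let L be a simplex in K × D (the convex hull of a finite affinely independent set) and let L_K = pr_K L be its projection onto K. Let (A, F) : L_K → 2^L be weakly naturally quasi-concave, where (A,F)(x) = A(x) × F(x) with A : L_K → 2^K and F : L_K → 2^D, and suppose that for each n ∈ ℕ, λ ∈ Δ_{n−1} and x₁, …, x_n ∈ L_K one has A(∑_{i=1}^n λ_i x_i) ⊆ ∩_{i=1}^n A(x_i). Let f : L × K → 2^Z be a correspondence such that: (i) for every (x,y) ∈ L, f(x, y, u) ⊆ C for all u ∈ A(x); (ii) for each z ∈ K, each n ∈ ℕ, all λ, λ' ∈ Δ_{n−1} and all (x₁,y₁), …, (x_n,y_n) ∈ L, f(∑_{i=1}^n λ_i x_i, ∑_{i=1}^n λ'_i y_i, z) ⊆ ∩_{i=1}^n f(x_i, y_i, z). Then there exist x* ∈ K and y* ∈ F(x*) such that x* ∈ A(x*) and f(x*, y*, z) ⊆ C for all z ∈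 A(x*); i.e. the solution set V_A(f) is nonempty. -/
open Set

/-!
For a family of at least three points, the requirement that `λ ↦ (g i (λ i))ᵢ` maps the simplex
into itself makes each `g i` additive on `[0, 1]`, hence, being continuous, the identity. So
`(A, F)` sends a convex combination of the points to the same convex combination of the chosen
`y i`. List the vertices `V j` of `L` (with repetitions, to have at least three) and write
`y i = ∑ j, μ i j • V j`. A stationary distribution `λ` of the row-stochastic matrix `μ` (a
minimiser of `dist (λ ᵥ* μ) λ` on the simplex; the minimum is `0` because Cesàro averages of an
orbit are almost invariant) gives `∑ λ i • y i = ∑ λ i • V i =: (x*, y*)`, which therefore lies in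
`A x* ×ˢ F x*`, and hypothesis (i) finishes.
-/

/-- A correspondence `T` is *weakly naturally quasi-concave* on `S`: for every finite
family `x 1, …, x n` in `S` there are `y i ∈ T (x i)` and continuous maps
`g i : [0,1] → [0,1]` with `g i 1 = 1`, `g i 0 = 0`, sending the standard simplex into
itself coordinatewise, such that `∑ g i (λ i) • y i ∈ T (∑ λ i • x i)` for every
`λ ∈ Δ_{n-1}`. -/
def WNQOn {E F : Type*} [AddCommGroup E] [Module ℝ E] [AddCommGroup F] [Module ℝ F]
    (T : E → Set F) (S : Set E) : Prop :=
  ∀ (n : ℕ) (x : Fin n → E), (∀ i, x i ∈ S) →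
    ∃ y : Fin n → F, (∀ i, y i ∈ T (x i)) ∧
      ∃ g : Fin n → ℝ → ℝ,
        (∀ i, ContinuousOn (g i) (Icc (0 : ℝ) 1)) ∧
        (∀ i, g i 1 = 1) ∧ (∀ i, g i 0 = 0) ∧
        (∀ lam ∈ stdSimplex ℝ (Fin n), (fun i => g i (lam i)) ∈ stdSimplex ℝ (Fin n)) ∧
        ∀ lam ∈ stdSimplex ℝ (Fin n),
          (∑ i, g i (lam i) • y i) ∈ T (∑ i, lam i • x i)

theorem eqOn_mul_of_map_add {H : ℝ → ℝ} (hc : ContinuousOn H (Icc 0 1))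
    (hadd : ∀ a b, 0 ≤ a → 0 ≤ b → a + b ≤ 1 → H (a + b) = H a + H b) :
    EqOn H (fun t => t * H 1) (Icc 0 1) := by
  have hnsmul : ∀ (p : ℕ) (u : ℝ), 0 ≤ u → p * u ≤ 1 → H (p * u) = p * H u := by
    intro p u hu
    induction p with
    | zero =>
      intro _
      simpa using hadd 0 0 le_rfl le_rfl (by norm_num)
    | succ p ih =>
      intro hp
      push_cast at hp ⊢
      have hpu : 0 ≤ (p : ℝ) * u := by positivity
      rw [add_mul, one_mul, hadd _ _ hpu hu (by linarith), ih (by linarith)]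
      ring
  have hrat : ∀ (p d : ℕ), 0 < d → (p : ℝ) / d ≤ 1 → H (p / d) = p / d * H 1 := by
    intro p d hd hpd
    have hd' : (0 : ℝ) < d := by exact_mod_cast hd
    have hinv : H 1 = d * H (1 / d) := by
      have h := hnsmul d (1 / d) (by positivity) (by rw [mul_one_div_cancel hd'.ne'])
      rwa [mul_one_div_cancel hd'.ne'] at h
    rw [div_eq_mul_one_div (p : ℝ), hnsmul p _ (by positivity) (by rwa [← div_eq_mul_one_div]),
      hinv]
    field_simp
  have hdense : Icc (0 : ℝ) 1 ⊆ closure (Ioo 0 1 ∩ range ((↑) : ℚ → ℝ)) := by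
    rw [← closure_Ioo zero_ne_one]
    exact closure_minimal (Rat.denseRange_cast.open_subset_closure_inter isOpen_Ioo)
      isClosed_closure
  refine EqOn.of_subset_closure ?_ hc (continuousOn_id.mul continuousOn_const)
    (inter_subset_left.trans Ioo_subset_Icc_self) hdense
  rintro _ ⟨hq, q, rfl⟩
  have hnum : 0 ≤ q.num := Rat.num_nonneg.2 (by exact_mod_cast hq.1.le)
  have hq' : (q : ℝ) = (q.num.toNat : ℝ) / q.den := by
    rw [Rat.cast_def]
    congr 1
    exact_mod_cast (Int.toNat_of_nonneg hnum).symm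
  rw [hq']
  exact hrat _ _ q.den_pos (hq' ▸ hq.2.le)

theorem eqOn_id_of_sum_apply_eq_one {ι : Type*} [Fintype ι] (hι : 3 ≤ Fintype.card ι)
    {g : ι → ℝ → ℝ} (hc : ∀ i, ContinuousOn (g i) (Icc 0 1))
    (h0 : ∀ i, g i 0 = 0) (h1 : ∀ i, g i 1 = 1)
    (hsum : ∀ lam ∈ stdSimplex ℝ ι, ∑ i, g i (lam i) = 1) (i : ι) :
    EqOn (g i) id (Icc 0 1) := by
  classical
  obtain ⟨j, hj, k, hk, hjk⟩ := (Finset.one_lt_card (s := Finset.univ.erase i)).mp (by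
    rw [Finset.card_erase_of_mem (Finset.mem_univ i), Finset.card_univ]
    omega)
  have hij : i ≠ j := (Finset.ne_of_mem_erase hj).symm
  have hik : i ≠ k := (Finset.ne_of_mem_erase hk).symm
  have key : ∀ a b c, 0 ≤ a → 0 ≤ b → 0 ≤ c → a + b + c = 1 →
      g i a + g j b + g k c = 1 := by
    intro a b c ha hb hc habc
    set lam : ι → ℝ := Pi.single i a + Pi.single j b + Pi.single k c
    have hlam : lam ∈ stdSimplex ℝ ι := by
      refine ⟨fun l => ?_, ?_⟩
      · simp only [lam, Pi.add_apply, Pi.single_apply]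
        split_ifs <;> linarith
      · simpa [lam, Finset.sum_add_distrib] using habc
    have hsupp : ∀ l ∉ ({i, j, k} : Finset ι), g l (lam l) = 0 := by
      intro l hl
      simp only [Finset.mem_insert, Finset.mem_singleton, not_or] at hl
      simp [lam, hl.1, hl.2.1, hl.2.2, h0]
    have hsum_lam : ∑ l, g l (lam l) = g i a + g j b + g k c := by
      rw [← Finset.sum_subset (Finset.subset_univ _) fun l _ => hsupp l,
        Finset.sum_insert (by simp [hij, hik]), Finset.sum_pair hjk]
      simp [lam, hij, hik, hjk, hij.symm, hik.symm, hjk.symm, add_assoc]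
    rw [← hsum_lam, hsum lam hlam]
  have hgi : ∀ t ∈ Icc (0 : ℝ) 1, g i t + g k (1 - t) = 1 := fun t ht => by
    simpa [h0] using key t 0 (1 - t) ht.1 le_rfl (by linarith [ht.2]) (by ring)
  have hgj : ∀ t ∈ Icc (0 : ℝ) 1, g j t + g k (1 - t) = 1 := fun t ht => by
    simpa [h0] using key 0 t (1 - t) le_rfl ht.1 (by linarith [ht.2]) (by ring)
  have hadd : ∀ a b, 0 ≤ a → 0 ≤ b → a + b ≤ 1 → g i (a + b) = g i a + g i b := by
    intro a b ha hb hab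
    have hb1 : b ∈ Icc (0 : ℝ) 1 := ⟨hb, by linarith⟩
    linarith [key a b (1 - (a + b)) ha hb (by linarith) (by ring),
      hgi (a + b) ⟨by positivity, hab⟩, hgi b hb1, hgj b hb1]
  intro t ht
  simpa [h1] using eqOn_mul_of_map_add (hc i) hadd ht

theorem WNQOn.exists_sum_smul_mem {E F : Type*} [AddCommGroup E] [Module ℝ E] [AddCommGroup F]
    [Module ℝ F] {T : E → Set F} {S : Set E} (hT : WNQOn T S) {m : ℕ} (hm : 3 ≤ m)
    {x : Fin m → E} (hx : ∀ i, x i ∈ S) :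
    ∃ y : Fin m → F, (∀ i, y i ∈ T (x i)) ∧
      ∀ lam ∈ stdSimplex ℝ (Fin m), ∑ i, lam i • y i ∈ T (∑ i, lam i • x i) := by
  obtain ⟨y, hy, g, hgc, hg1, hg0, hgΔ, hgT⟩ := hT m x hx
  have hg : ∀ i, EqOn (g i) id (Icc 0 1) :=
    eqOn_id_of_sum_apply_eq_one (by simpa using hm) hgc hg0 hg1 fun lam hlam => (hgΔ lam hlam).2
  refine ⟨y, hy, fun lam hlam => ?_⟩
  simpa only [fun i => hg i (mem_Icc_of_mem_stdSimplex hlam i), id] using hgT lam hlam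

namespace Matrix

theorem vecMul_mem_stdSimplex {ι : Type*} [Fintype ι] [DecidableEq ι]
    {M : Matrix ι ι ℝ} (hM : M ∈ rowStochastic ℝ ι) {x : ι → ℝ}
    (hx : x ∈ stdSimplex ℝ ι) : x ᵥ* M ∈ stdSimplex ℝ ι := by
  refine ⟨nonneg_vecMul_of_mem_rowStochastic hM hx.1, ?_⟩
  simpa [dotProduct_one] using
    vecMul_dotProduct_one_eq_one_rowStochastic hM (by simpa [dotProduct_one] using hx.2)

theorem exists_mem_stdSimplex_vecMul_eq_self {ι : Type*} [Fintype ι] [DecidableEq ι]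
    [Nonempty ι] {M : Matrix ι ι ℝ} (hM : M ∈ rowStochastic ℝ ι) :
    ∃ x ∈ stdSimplex ℝ ι, x ᵥ* M = x := by
  set T : (ι → ℝ) → ι → ℝ := fun x => x ᵥ* M
  have hT : MapsTo T (stdSimplex ℝ ι) (stdSimplex ℝ ι) := fun _ => vecMul_mem_stdSimplex hM
  set w : ℕ → ι → ℝ := fun k => T^[k] (Pi.single (Classical.arbitrary ι) 1)
  have hw : ∀ k, w k ∈ stdSimplex ℝ ι := fun k => hT.iterate k (single_mem_stdSimplex ℝ _)
  set avg : ℕ → ι → ℝ := fun k => (1 / ((k : ℝ) + 1)) • ∑ a ∈ Finset.range (k + 1), w a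
  have havg : ∀ k, avg k ∈ stdSimplex ℝ ι := fun k => by
    simp only [avg, Finset.smul_sum]
    have hweights : ∑ _a ∈ Finset.range (k + 1), 1 / ((k : ℝ) + 1) = 1 := by
      rw [Finset.sum_const, Finset.card_range, nsmul_eq_mul]
      push_cast
      field_simp
    exact (convex_stdSimplex ℝ ι).sum_mem (fun _ _ => by positivity) hweights fun a _ => hw a
  have hdist : ∀ k, dist (T (avg k)) (avg k) ≤ 1 / ((k : ℝ) + 1) := fun k => by
    have hTavg : T (avg k) - avg k = (1 / ((k : ℝ) + 1)) • (w (k + 1) - w 0) := by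
      simp only [T, avg, smul_vecMul, sum_vecMul, ← smul_sub, ← Finset.sum_sub_distrib]
      rw [← Finset.sum_range_sub]
      congr 2
      ext a : 1
      simp only [w, Function.iterate_succ_apply']
      rfl
    rw [dist_eq_norm, hTavg, norm_smul, Real.norm_of_nonneg (by positivity), ← dist_eq_norm]
    exact mul_le_of_le_one_right (by positivity)
      ((Metric.dist_le_diam_of_mem (bounded_stdSimplex ι) (hw _) (hw _)).trans diam_stdSimplex_le)
  have hTc : Continuous T := (vecMulLinear M).continuous_of_finiteDimensional
  obtain ⟨x, hx, hmin⟩ := (isCompact_stdSimplex ℝ ι).exists_isMinOn ⟨_, havg 0⟩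
    (hTc.dist continuous_id).continuousOn
  exact ⟨x, hx, dist_le_zero.mp (ge_of_tendsto' tendsto_one_div_add_atTop_nhds_zero_nat
    fun k => (hmin (havg k)).trans (hdist k))⟩

end Matrix

theorem exists_mem_stdSimplex_sum_smul_eq {P ι : Type*} [AddCommGroup P] [Module ℝ P]
    [Fintype ι] (V : ι → P) {z : P} (hz : z ∈ convexHull ℝ (range V)) :
    ∃ μ ∈ stdSimplex ℝ ι, ∑ j, μ j • V j = z := by
  classical
  obtain ⟨s, w, hw₀, hw₁, rfl⟩ := (convexHull_range_eq_exists_affineCombination V).subset hz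
  refine ⟨fun j => if j ∈ s then w j else 0, ⟨fun j => ?_, ?_⟩, ?_⟩
  · dsimp only
    split_ifs with h
    exacts [hw₀ j h, le_rfl]
  · rwa [Finset.sum_ite_mem, Finset.univ_inter]
  · simp_rw [Finset.affineCombination_eq_linear_combination _ _ _ hw₁, ite_smul, zero_smul,
      Finset.sum_ite_mem, Finset.univ_inter]

theorem exists_mem_stdSimplex_sum_smul_eq_sum_smul {P ι : Type*} [AddCommGroup P] [Module ℝ P]
    [Fintype ι] [DecidableEq ι] [Nonempty ι] (V y : ι → P)
    (hy : ∀ i, y i ∈ convexHull ℝ (range V)) :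
    ∃ lam ∈ stdSimplex ℝ ι, ∑ i, lam i • y i = ∑ i, lam i • V i := by
  choose μ hμ hμV using fun i => exists_mem_stdSimplex_sum_smul_eq V (hy i)
  have hM : Matrix.of μ ∈ Matrix.rowStochastic ℝ ι :=
    Matrix.mem_rowStochastic_iff_sum.2 ⟨fun i j => (hμ i).1 j, fun i => (hμ i).2⟩
  obtain ⟨lam, hlam, hfix⟩ := Matrix.exists_mem_stdSimplex_vecMul_eq_self hM
  refine ⟨lam, hlam, ?_⟩
  calc ∑ i, lam i • y i = ∑ j, (∑ i, lam i * μ i j) • V j := by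
        simp only [← hμV, Finset.smul_sum, smul_smul, Finset.sum_smul]
        exact Finset.sum_comm
    _ = ∑ j, lam j • V j := by
        refine Finset.sum_congr rfl fun j _ => ?_
        rw [← congrFun hfix j]
        rfl

theorem stmt_7_general {E₁ E₂ Z : Type*}
    [AddCommGroup E₁] [Module ℝ E₁]
    [AddCommGroup E₂] [Module ℝ E₂]
    (K : Set E₁) (D : Set E₂)
    (C : Set Z)
    -- `L` is a simplex in `K × D`; `L_K` is its projection on `K`
    (n : ℕ) (hn : 0 < n) (v : Fin n → E₁ × E₂)
    (L : Set (E₁ × E₂)) (hL : L = convexHull ℝ (range v)) (hLKD : L ⊆ K ×ˢ D)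
    (A : E₁ → Set E₁) (F : E₁ → Set E₂)
    -- `(A, F) : L_K → 2^L` is weakly naturally quasi-concave
    (hAFL : ∀ x ∈ Prod.fst '' L, (A x) ×ˢ (F x) ⊆ L)
    (hWNQ : WNQOn (fun x => (A x) ×ˢ (F x)) (Prod.fst '' L))
    (f : E₁ → E₂ → E₁ → Set Z)
    -- (i) `f (x, y, A x) ⊆ C` for `(x, y) ∈ L`
    (hf1 : ∀ p ∈ L, ∀ u ∈ A p.1, f p.1 p.2 u ⊆ C) :
    ∃ x ∈ K, ∃ y ∈ F x, x ∈ A x ∧ ∀ z ∈ A x, f x y z ⊆ C := by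
  let τ : Fin (n + 2) → Fin n := fun j => ⟨j % n, Nat.mod_lt _ hn⟩
  have hτ : Function.Surjective τ := fun i =>
    ⟨Fin.castAdd 2 i, Fin.ext (Nat.mod_eq_of_lt i.isLt)⟩
  set V := v ∘ τ
  have hLV : L = convexHull ℝ (range V) := by rw [hL, hτ.range_comp]
  have hVL : ∀ j, V j ∈ L := fun j => hLV ▸ subset_convexHull ℝ _ (mem_range_self j)
  obtain ⟨y, hy, hyA⟩ := hWNQ.exists_sum_smul_mem (by omega) (x := fun j => (V j).1)
    fun j => mem_image_of_mem _ (hVL j)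
  obtain ⟨lam, hlam, hyV⟩ := exists_mem_stdSimplex_sum_smul_eq_sum_smul V y
    fun i => hLV ▸ hAFL _ (mem_image_of_mem _ (hVL i)) (hy i)
  set p := ∑ i, lam i • V i
  have hp : p ∈ L := hLV ▸ (convex_convexHull ℝ _).sum_mem (fun i _ => hlam.1 i) hlam.2
    fun i _ => subset_convexHull ℝ _ (mem_range_self i)
  have hpA : p ∈ A p.1 ×ˢ F p.1 := by
    simpa only [hyV, p, Prod.fst_sum, Prod.smul_fst] using hyA lam hlam
  exact ⟨p.1, (hLKD hp).1, p.2, hpA.2, hpA.1, fun z hz => hf1 p hp z hz⟩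

/-- Theorem 11: existence of strong solutions for the generalized
strong vector quasi-equilibrium problem under weak natural quasi-concavity. -/
theorem stmt_7 {E₁ E₂ Z : Type*}
    [AddCommGroup E₁] [Module ℝ E₁] [TopologicalSpace E₁] [IsTopologicalAddGroup E₁]
    [ContinuousSMul ℝ E₁] [T2Space E₁]
    [AddCommGroup E₂] [Module ℝ E₂] [TopologicalSpace E₂] [IsTopologicalAddGroup E₂]
    [ContinuousSMul ℝ E₂] [T2Space E₂]
    [AddCommGroup Z] [Module ℝ Z] [TopologicalSpace Z] [IsTopologicalAddGroup Z]
    [ContinuousSMul ℝ Z] [T2Space Z]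
    (K : Set E₁) (D : Set E₂)
    -- `C` is a convex cone in `Z`
    (C : Set Z) (hCcv : Convex ℝ C) (hCcone : ∀ r : ℝ, 0 < r → ∀ c ∈ C, r • c ∈ C)
    -- `L` is a simplex in `K × D`; `L_K` is its projection on `K`
    (n : ℕ) (hn : 0 < n) (v : Fin n → E₁ × E₂) (hv : AffineIndependent ℝ v)
    (L : Set (E₁ × E₂)) (hL : L = convexHull ℝ (range v)) (hLKD : L ⊆ K ×ˢ D)
    (A : E₁ → Set E₁) (F : E₁ → Set E₂)
    -- `(A, F) : L_K → 2^L` is weakly naturally quasi-concave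
    (hAFL : ∀ x ∈ Prod.fst '' L, (A x) ×ˢ (F x) ⊆ L)
    (hWNQ : WNQOn (fun x => (A x) ×ˢ (F x)) (Prod.fst '' L))
    -- `A (∑ λ i • x i) ⊆ ⋂ A (x i)`
    (hAcap : ∀ (m : ℕ) (lam : Fin m → ℝ), lam ∈ stdSimplex ℝ (Fin m) →
      ∀ x : Fin m → E₁, (∀ i, x i ∈ Prod.fst '' L) →
        A (∑ i, lam i • x i) ⊆ ⋂ i, A (x i))
    (f : E₁ → E₂ → E₁ → Set Z)
    -- (i) `f (x, y, A x) ⊆ C` for `(x, y) ∈ L`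
    (hf1 : ∀ p ∈ L, ∀ u ∈ A p.1, f p.1 p.2 u ⊆ C)
    -- (ii) concavity-type condition on `f`
    (hf2 : ∀ z ∈ K, ∀ (m : ℕ) (lam lam' : Fin m → ℝ),
      lam ∈ stdSimplex ℝ (Fin m) → lam' ∈ stdSimplex ℝ (Fin m) →
      ∀ p : Fin m → E₁ × E₂, (∀ i, p i ∈ L) →
        f (∑ i, lam i • (p i).1) (∑ i, lam' i • (p i).2) z ⊆
          ⋂ i, f (p i).1 (p i).2 z) :
    ∃ x ∈ K, ∃ y ∈ F x, x ∈ A x ∧ ∀ z ∈ A x, f x y z ⊆ C :=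
  stmt_7_general K D C n hn v L hL hLKD A F hAFL hWNQ f hf1
end

section
/- Let E₁, E₂, Z be Hausdorff topological vector spaces, K ⊆ E₁ and D ⊆ E₂ subsets, and C a convex cone in Z. Let B be the biconvex hull of a finite set {(a₁,b₁), …, (a_n,b_n)} ⊆ K × D and write B_K = pr_K B. Let A : B_K → 2^K and F : B_K → 2^D be correspondences with weakly convex graphs whose product (A,F)(x) = A(x) × F(x) maps B_K into 2^B, and suppose that for each n ∈ ℕ, λ ∈ Δ_{n−1} and x₁, …, x_n ∈ B_K one has A(∑_{i=1}^n λ_i x_i) ⊆ ∩_{i=1}^n A(x_i). Let f : B × K → 2^Z satisfy: (a) for every (x,y) ∈ B, f(x, y, u) ⊆ C for all u ∈ A(x); (b) for each z ∈ K, each n ∈ ℕ, each λ ∈ Δ_{n−1} and all (x₁,y₁), …, (x_n,y_n) ∈ B, f(∑_{i=1}^n λ_i x_i, ∑_{i=1}^n λ_i y_i, z) ⊆ ∩_{i=1}^n f(x_i, y_i, z). Then there exist x* ∈ K and y* ∈ F(x*) such that x* ∈ A(x*) and f(x*, y*, z) ⊆ C for all z ∈ A(x*); i.e. V_A(f) is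 nonempty. -/
open Pointwise Topology Set

/-- A set `B ⊆ E₁ × E₂` is *biconvex* if all of its sections are convex. -/
def IsBiconvex {E₁ E₂ : Type*} [AddCommGroup E₁] [Module ℝ E₁]
    [AddCommGroup E₂] [Module ℝ E₂] (B : Set (E₁ × E₂)) : Prop :=
  (∀ x : E₁, Convex ℝ {y : E₂ | (x, y) ∈ B}) ∧
  (∀ y : E₂, Convex ℝ {x : E₁ | (x, y) ∈ B})

/-- The *biconvex hull* of a set: the intersection of all biconvex sets containing it. -/
def biconvexHull {E₁ E₂ : Type*} [AddCommGroup E₁] [Module ℝ E₁]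
    [AddCommGroup E₂] [Module ℝ E₂] (P : Set (E₁ × E₂)) : Set (E₁ × E₂) :=
  ⋂₀ {B : Set (E₁ × E₂) | P ⊆ B ∧ IsBiconvex B}

/-- A correspondence `T` has a *weakly convex graph* on `S`: for each finite family
`x 1, …, x n` in `S` there are `y i ∈ T (x i)` with
`∑ λ i • y i ∈ T (∑ λ i • x i)` for every `λ` in the standard simplex. -/
def WeaklyConvexGraphOn {E F : Type*} [AddCommGroup E] [Module ℝ E]
    [AddCommGroup F] [Module ℝ F] (T : E → Set F) (S : Set E) : Prop :=
  ∀ (n : ℕ) (x : Fin n → E), (∀ i, x i ∈ S) →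
    ∃ y : Fin n → F, (∀ i, y i ∈ T (x i)) ∧
      ∀ lam ∈ stdSimplex ℝ (Fin n), (∑ i, lam i • y i) ∈ T (∑ i, lam i • x i)

/-! At the first coordinates `a i` of the generators, the weakly convex graph of `A` gives
selections `c i ∈ A (a i)`; these lie in the convex hull of the `a i`, so `c i = ∑ j, M i j • a j`
for a row-stochastic matrix `M`. A stationary distribution `λ` of `M` (a fixed point of the
linear map `λ ↦ λ M` of the simplex, found as a limit of Cesàro means of an orbit) satisfies
`∑ λ i • c i = ∑ λ i • a i =: x`, hence `x ∈ A x`. The intersection condition on `A` puts `x`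
into `B_K`, the weakly convex graph of `F` supplies `y ∈ F x` with `(x, y) ∈ B`, and
condition (a) makes `(x, y)` a solution. -/

open Filter Finset in
theorem ContinuousLinearMap.exists_mem_isFixedPt_of_mapsTo {E : Type*} [NormedAddCommGroup E]
    [NormedSpace ℝ E] (T : E →L[ℝ] E) {S : Set E} (hSc : IsCompact S) (hSv : Convex ℝ S)
    (hSne : S.Nonempty) (hTS : MapsTo T S S) : ∃ x ∈ S, Function.IsFixedPt T x := by
  obtain ⟨x₀, hx₀⟩ := hSne
  obtain ⟨R, hR⟩ := hSc.isBounded.exists_norm_le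
  set u : ℕ → E := fun k => T^[k] x₀
  have hu : ∀ k, u k ∈ S := fun k => hTS.iterate k hx₀
  set s : ℕ → E := fun k => ((k : ℝ) + 1)⁻¹ • ∑ i ∈ range (k + 1), u i
  have hs : ∀ k, s k ∈ S := fun k => by
    simp only [s, smul_sum]
    refine hSv.sum_mem (fun _ _ => by positivity) ?_ fun i _ => hu i
    rw [sum_const, card_range, nsmul_eq_mul]
    push_cast
    exact mul_inv_cancel₀ (by positivity)
  have hTs : ∀ k, T (s k) - s k = ((k : ℝ) + 1)⁻¹ • (u (k + 1) - u 0) := fun k => by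
    have hTu : ∀ i, T (u i) = u (i + 1) := fun i => (Function.iterate_succ_apply' T i x₀).symm
    simp only [s, map_smul, map_sum, hTu, ← smul_sub, ← sum_sub_distrib, sum_range_sub u]
  have hTs_lim : Tendsto (fun k => T (s k) - s k) atTop (𝓝 0) := by
    refine squeeze_zero_norm (fun k => ?_)
      (by simpa using tendsto_one_div_add_atTop_nhds_zero_nat.mul_const (R + R))
    rw [hTs, norm_smul, norm_inv, Real.norm_of_nonneg (by positivity)]
    gcongr
    exact (norm_sub_le _ _).trans (add_le_add (hR _ (hu _)) (hR _ (hu _)))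
  obtain ⟨x, hxS, φ, hφ, hsφ⟩ := hSc.tendsto_subseq hs
  have hTsφ : Tendsto (fun j => T (s (φ j))) atTop (𝓝 (T x)) :=
    (T.continuous.tendsto x).comp hsφ
  have hTsφ' : Tendsto (fun j => T (s (φ j))) atTop (𝓝 x) := by
    simpa using hsφ.add (hTs_lim.comp hφ.tendsto_atTop)
  exact ⟨x, hxS, tendsto_nhds_unique hTsφ hTsφ'⟩

open Matrix in
theorem Matrix.exists_mem_stdSimplex_vecMul_eq_self_s8 {ι : Type*} [Fintype ι] [DecidableEq ι]
    [Nonempty ι] {M : Matrix ι ι ℝ} (hM : M ∈ rowStochastic ℝ ι) :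
    ∃ x ∈ stdSimplex ℝ ι, x ᵥ* M = x := by
  refine M.vecMulLinear.toContinuousLinearMap.exists_mem_isFixedPt_of_mapsTo
    (isCompact_stdSimplex ℝ ι) (convex_stdSimplex ℝ ι)
    ⟨_, single_mem_stdSimplex ℝ (Classical.arbitrary ι)⟩ fun x hx => ?_
  refine ⟨nonneg_vecMul_of_mem_rowStochastic hM hx.1, ?_⟩
  simpa [dotProduct] using vecMul_dotProduct_one_eq_one_rowStochastic hM (x := x)
    (by simpa [dotProduct] using hx.2)

theorem exists_mem_stdSimplex_of_mem_convexHull_range {E ι : Type*} [AddCommGroup E]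
    [Module ℝ E] [Fintype ι] (a : ι → E) {x : E} (hx : x ∈ convexHull ℝ (range a)) :
    ∃ w ∈ stdSimplex ℝ ι, ∑ i, w i • a i = x := by
  classical
  have hhull : convexHull ℝ (range a) = Fintype.linearCombination ℝ a '' stdSimplex ℝ ι := by
    rw [← convexHull_rangle_single_eq_stdSimplex, LinearMap.image_convexHull, ← range_comp]
    congr
    funext i
    simp [Fintype.linearCombination_apply, Pi.single_apply]
  obtain ⟨w, hw, rfl⟩ := hhull ▸ hx
  exact ⟨w, hw, (Fintype.linearCombination_apply ℝ a w).symm⟩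

section Biconvex

variable {E₁ E₂ : Type*} [AddCommGroup E₁] [Module ℝ E₁] [AddCommGroup E₂] [Module ℝ E₂]

theorem subset_biconvexHull (P : Set (E₁ × E₂)) : P ⊆ biconvexHull P :=
  subset_sInter fun _ hB => hB.1

theorem biconvexHull_min {P B : Set (E₁ × E₂)} (hPB : P ⊆ B) (hB : IsBiconvex B) :
    biconvexHull P ⊆ B :=
  sInter_subset_of_mem ⟨hPB, hB⟩

theorem Convex.isBiconvex_prod {s : Set E₁} {t : Set E₂} (hs : Convex ℝ s) (ht : Convex ℝ t) :
    IsBiconvex (s ×ˢ t) :=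
  ⟨fun _ _ h₁ _ h₂ _ _ ha hb hab => ⟨h₁.1, ht h₁.2 h₂.2 ha hb hab⟩,
    fun _ _ h₁ _ h₂ _ _ ha hb hab => ⟨hs h₁.1 h₂.1 ha hb hab, h₁.2⟩⟩

theorem biconvexHull_subset_convexHull_prod (P : Set (E₁ × E₂)) :
    biconvexHull P ⊆ convexHull ℝ (Prod.fst '' P) ×ˢ convexHull ℝ (Prod.snd '' P) :=
  biconvexHull_min (fun _ hp => ⟨subset_convexHull ℝ _ (mem_image_of_mem _ hp),
      subset_convexHull ℝ _ (mem_image_of_mem _ hp)⟩)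
    ((convex_convexHull ℝ _).isBiconvex_prod (convex_convexHull ℝ _))

end Biconvex

theorem WeaklyConvexGraphOn.exists_convexCombination_mem_self {E : Type*} [AddCommGroup E]
    [Module ℝ E] {T : E → Set E} {S : Set E} (hT : WeaklyConvexGraphOn T S) {n : ℕ} (hn : 0 < n)
    (a : Fin n → E) (haS : ∀ i, a i ∈ S) (hTa : ∀ i, T (a i) ⊆ convexHull ℝ (range a)) :
    ∃ lam ∈ stdSimplex ℝ (Fin n), ∑ i, lam i • a i ∈ T (∑ i, lam i • a i) := by
  have : Nonempty (Fin n) := ⟨⟨0, hn⟩⟩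
  obtain ⟨c, hcT, hc⟩ := hT n a haS
  choose M hM hMc using fun i => exists_mem_stdSimplex_of_mem_convexHull_range a (hTa i (hcT i))
  obtain ⟨lam, hlam, hstat⟩ := Matrix.exists_mem_stdSimplex_vecMul_eq_self_s8 (M := Matrix.of M)
    (Matrix.mem_rowStochastic_iff_sum.2 ⟨fun i => (hM i).1, fun i => (hM i).2⟩)
  have hsum : ∑ i, lam i • c i = ∑ j, lam j • a j := calc
    ∑ i, lam i • c i = ∑ i, lam i • ∑ j, M i j • a j := by simp_rw [hMc]
    _ = ∑ j, (∑ i, lam i * M i j) • a j := by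
      simp_rw [Finset.smul_sum, smul_smul, Finset.sum_smul]
      exact Finset.sum_comm
    _ = ∑ j, lam j • a j := by
      congr! with j
      simpa [Matrix.vecMul, dotProduct] using congrFun hstat j
  exact ⟨lam, hlam, hsum ▸ hc lam hlam⟩

theorem stmt_8_general {E₁ E₂ Z : Type*}
    [AddCommGroup E₁] [Module ℝ E₁]
    [AddCommGroup E₂] [Module ℝ E₂]
    (K : Set E₁) (D : Set E₂)
    (C : Set Z)
    -- `B` is the biconvex hull of a finite subset of `K × D`
    (n : ℕ) (hn : 0 < n) (v : Fin n → E₁ × E₂)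
    (B : Set (E₁ × E₂)) (hB : B = biconvexHull (range v)) (hBKD : B ⊆ K ×ˢ D)
    (A : E₁ → Set E₁) (F : E₁ → Set E₂)
    -- `A` and `F` have weakly convex graphs on `B_K`, and `(A, F)` maps `B_K` into `2^B`
    (hA : WeaklyConvexGraphOn A (Prod.fst '' B))
    (hF : WeaklyConvexGraphOn F (Prod.fst '' B))
    (hAFB : ∀ x ∈ Prod.fst '' B, (A x) ×ˢ (F x) ⊆ B)
    -- `A (∑ λ i • x i) ⊆ ⋂ A (x i)`
    (hAcap : ∀ (m : ℕ) (lam : Fin m → ℝ), lam ∈ stdSimplex ℝ (Fin m) →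
      ∀ x : Fin m → E₁, (∀ i, x i ∈ Prod.fst '' B) →
        A (∑ i, lam i • x i) ⊆ ⋂ i, A (x i))
    (f : E₁ → E₂ → E₁ → Set Z)
    -- (a) `f (x, y, A x) ⊆ C` for `(x, y) ∈ B`
    (hf1 : ∀ p ∈ B, ∀ u ∈ A p.1, f p.1 p.2 u ⊆ C) :
    ∃ x ∈ K, ∃ y ∈ F x, x ∈ A x ∧ ∀ z ∈ A x, f x y z ⊆ C := by
  set a : Fin n → E₁ := fun i => (v i).1
  have haB : ∀ i, a i ∈ Prod.fst '' B :=
    fun i => ⟨v i, hB ▸ subset_biconvexHull _ ⟨i, rfl⟩, rfl⟩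
  obtain ⟨d, hdF, hd⟩ := hF n a haB
  have hAa : ∀ i, A (a i) ⊆ convexHull ℝ (range a) := fun i x hx => by
    have hxd : (x, d i) ∈ B := hAFB _ (haB i) ⟨hx, hdF i⟩
    rw [hB] at hxd
    exact (range_comp Prod.fst v ▸ biconvexHull_subset_convexHull_prod _ hxd).1
  obtain ⟨lam, hlam, hxA⟩ := hA.exists_convexCombination_mem_self hn a haB hAa
  set x := ∑ i, lam i • a i
  have hxBK : x ∈ Prod.fst '' B :=
    ⟨(x, d ⟨0, hn⟩), hAFB _ (haB _) ⟨mem_iInter.1 (hAcap n lam hlam a haB hxA) _, hdF _⟩, rfl⟩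
  have hxyB : (x, ∑ i, lam i • d i) ∈ B := hAFB x hxBK ⟨hxA, hd lam hlam⟩
  exact ⟨x, (hBKD hxyB).1, _, hd lam hlam, hxA, hf1 _ hxyB⟩

/-- Theorem 14: existence of strong solutions for the generalized
strong vector quasi-equilibrium problem on a biconvex hull, for correspondences with
weakly convex graphs. -/
theorem stmt_8 {E₁ E₂ Z : Type*}
    [AddCommGroup E₁] [Module ℝ E₁] [TopologicalSpace E₁] [IsTopologicalAddGroup E₁]
    [ContinuousSMul ℝ E₁] [T2Space E₁]
    [AddCommGroup E₂] [Module ℝ E₂] [TopologicalSpace E₂] [IsTopologicalAddGroup E₂]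
    [ContinuousSMul ℝ E₂] [T2Space E₂]
    [AddCommGroup Z] [Module ℝ Z] [TopologicalSpace Z] [IsTopologicalAddGroup Z]
    [ContinuousSMul ℝ Z] [T2Space Z]
    (K : Set E₁) (D : Set E₂)
    -- `C` is a convex cone in `Z`
    (C : Set Z) (hCcv : Convex ℝ C) (hCcone : ∀ r : ℝ, 0 < r → ∀ c ∈ C, r • c ∈ C)
    -- `B` is the biconvex hull of a finite subset of `K × D`
    (n : ℕ) (hn : 0 < n) (v : Fin n → E₁ × E₂) (hvKD : ∀ i, v i ∈ K ×ˢ D)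
    (B : Set (E₁ × E₂)) (hB : B = biconvexHull (range v)) (hBKD : B ⊆ K ×ˢ D)
    (A : E₁ → Set E₁) (F : E₁ → Set E₂)
    -- `A` and `F` have weakly convex graphs on `B_K`, and `(A, F)` maps `B_K` into `2^B`
    (hA : WeaklyConvexGraphOn A (Prod.fst '' B))
    (hF : WeaklyConvexGraphOn F (Prod.fst '' B))
    (hAFB : ∀ x ∈ Prod.fst '' B, (A x) ×ˢ (F x) ⊆ B)
    -- `A (∑ λ i • x i) ⊆ ⋂ A (x i)`
    (hAcap : ∀ (m : ℕ) (lam : Fin m → ℝ), lam ∈ stdSimplex ℝ (Fin m) →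
      ∀ x : Fin m → E₁, (∀ i, x i ∈ Prod.fst '' B) →
        A (∑ i, lam i • x i) ⊆ ⋂ i, A (x i))
    (f : E₁ → E₂ → E₁ → Set Z)
    -- (a) `f (x, y, A x) ⊆ C` for `(x, y) ∈ B`
    (hf1 : ∀ p ∈ B, ∀ u ∈ A p.1, f p.1 p.2 u ⊆ C)
    -- (b) concavity-type condition on `f`
    (hf2 : ∀ z ∈ K, ∀ (m : ℕ) (lam : Fin m → ℝ), lam ∈ stdSimplex ℝ (Fin m) →
      ∀ p : Fin m → E₁ × E₂, (∀ i, p i ∈ B) →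
        f (∑ i, lam i • (p i).1) (∑ i, lam i • (p i).2) z ⊆
          ⋂ i, f (p i).1 (p i).2 z) :
    ∃ x ∈ K, ∃ y ∈ F x, x ∈ A x ∧ ∀ z ∈ A x, f x y z ⊆ C :=
  stmt_8_general K D C n hn v B hB hBKD A F hA hF hAFB hAcap f hf1
end

section
/- Let X be a nonempty convex subset of a topological vector space, Z a topological vector space, C a pointed closed convex cone in Z, and W ⊆ Z a set satisfying W + C ⊆ W (e.g. W = C or W = int C). If g : X → 2^Z is a correspondence with nonempty values that is properly C-quasiconvex, then the set {u ∈ X : g(u) ⊄ W} is convex. -/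
open Pointwise Set

theorem Set.subset_of_subset_add_of_add_subset {Z : Type*} [Add Z] {A B C W : Set Z}
    (hW : W + C ⊆ W) (hAB : A ⊆ B + C) (hB : B ⊆ W) : A ⊆ W :=
  hAB.trans ((add_subset_add_right hB).trans hW)

theorem stmt_10_general {E Z : Type*}
    [AddCommGroup E] [Module ℝ E]
    [AddCommGroup Z] [Module ℝ Z]
    (X : Set E) (hXcv : Convex ℝ X)
    (C : Set Z)
    (W : Set Z) (hW : W + C ⊆ W)
    (g : E → Set Z)
    -- `g` is properly `C`-quasiconvex on `X`
    (hgqc : ∀ u₁ ∈ X, ∀ u₂ ∈ X, ∀ t ∈ Icc (0 : ℝ) 1,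
      g u₁ ⊆ g (t • u₁ + (1 - t) • u₂) + C ∨
      g u₂ ⊆ g (t • u₁ + (1 - t) • u₂) + C) :
    Convex ℝ {u : E | u ∈ X ∧ ¬ g u ⊆ W} := by
  intro u₁ hu₁ u₂ hu₂ a b ha hb hab
  refine ⟨hXcv hu₁.1 hu₂.1 ha hb hab, fun hgW => ?_⟩
  obtain rfl : b = 1 - a := eq_sub_of_add_eq' hab
  rcases hgqc u₁ hu₁.1 u₂ hu₂.1 a ⟨ha, by linarith⟩ with h | h
  · exact hu₁.2 (subset_of_subset_add_of_add_subset hW h hgW)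
  · exact hu₂.2 (subset_of_subset_add_of_add_subset hW h hgW)

/-- for a properly `C`-quasiconvex correspondence `g` with nonempty
values, the set `{u ∈ X : g u ⊄ W}` is convex whenever `W + C ⊆ W`. -/
theorem stmt_10 {E Z : Type*}
    [AddCommGroup E] [Module ℝ E] [TopologicalSpace E] [IsTopologicalAddGroup E]
    [ContinuousSMul ℝ E]
    [AddCommGroup Z] [Module ℝ Z] [TopologicalSpace Z] [IsTopologicalAddGroup Z]
    [ContinuousSMul ℝ Z]
    (X : Set E) (hXne : X.Nonempty) (hXcv : Convex ℝ X)
    -- `C` is a pointed closed convex cone in `Z`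
    (C : Set Z) (hCcl : IsClosed C) (hCcv : Convex ℝ C)
    (hCcone : ∀ r : ℝ, 0 < r → ∀ c ∈ C, r • c ∈ C)
    (hCpointed : C ∩ (-C) ⊆ {0})
    (W : Set Z) (hW : W + C ⊆ W)
    (g : E → Set Z) (hgne : ∀ u ∈ X, (g u).Nonempty)
    -- `g` is properly `C`-quasiconvex on `X`
    (hgqc : ∀ u₁ ∈ X, ∀ u₂ ∈ X, ∀ t ∈ Icc (0 : ℝ) 1,
      g u₁ ⊆ g (t • u₁ + (1 - t) • u₂) + C ∨
      g u₂ ⊆ g (t • u₁ + (1 - t) • u₂) + C) :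
    Convex ℝ {u : E | u ∈ X ∧ ¬ g u ⊆ W} :=
  stmt_10_general X hXcv C W hW g hgqc
end

section
/- Let W be a topological space, Z a topological vector space, and C a closed convex cone in Z. If g : W → 2^Z is a correspondence with nonempty values that is lower (−C)-continuous at every point of W, then the set {w ∈ W : g(w) ⊆ C} is closed in W (equivalently, {w ∈ W : g(w) ⊄ C} is open). -/
open Pointwise Set Topology Filter

/-!
If `w₀` is a limit of points `w` with `g w ⊆ C`, then every `z ∈ g w₀` lies in
`g w + U + C ⊆ C + U + C ⊆ C + U` for each neighbourhood `U` of `0`, since `C + C ⊆ C`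
for a convex cone. Hence `z` lies in the closure of `C`, which is `C`.
-/

theorem Convex.add_mem_of_smul_mem {𝕜 E : Type*} [Field 𝕜] [LinearOrder 𝕜]
    [IsStrictOrderedRing 𝕜] [AddCommGroup E] [Module 𝕜 E] {C : Set E} (hCcv : Convex 𝕜 C)
    (hCcone : ∀ r : 𝕜, 0 < r → ∀ c ∈ C, r • c ∈ C) {x y : E} (hx : x ∈ C) (hy : y ∈ C) :
    x + y ∈ C := by
  have hmid : (2⁻¹ : 𝕜) • x + (2⁻¹ : 𝕜) • y ∈ C :=
    hCcv hx hy (by positivity) (by positivity) (by norm_num)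
  have h2 : (2 : 𝕜) • ((2⁻¹ : 𝕜) • x + (2⁻¹ : 𝕜) • y) = x + y := by
    rw [smul_add, smul_smul, smul_smul, mul_inv_cancel₀ two_ne_zero, one_smul, one_smul]
  exact h2 ▸ hCcone 2 two_pos _ hmid

theorem mem_closure_of_forall_mem_add_nhds_zero {G : Type*} [AddCommGroup G] [TopologicalSpace G]
    [IsTopologicalAddGroup G] {s : Set G} {x : G} (h : ∀ U ∈ 𝓝 (0 : G), x ∈ s + U) :
    x ∈ closure s := by
  refine mem_closure_iff_nhds_zero.2 fun U hU => ?_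
  obtain ⟨y, hy, u, hu, rfl⟩ := h (-U) (neg_mem_nhds_zero G hU)
  exact ⟨y, hy, by simpa using hu⟩

/-- Lower `(-C)`-continuity of a set-valued map `g` at `w₀`. -/
def LowerContinuousAt {W Z : Type*} [TopologicalSpace W] [Add Z] [Zero Z] [TopologicalSpace Z]
    (C : Set Z) (g : W → Set Z) (w₀ : W) : Prop :=
  ∀ U ∈ 𝓝 (0 : Z), ∀ᶠ w in 𝓝 w₀, g w₀ ⊆ g w + U + C

theorem LowerContinuousAt.subset_of_mem_closure {W Z : Type*} [TopologicalSpace W]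
    [AddCommGroup Z] [TopologicalSpace Z] [IsTopologicalAddGroup Z] {C : Set Z}
    {g : W → Set Z} {w₀ : W} (hg : LowerContinuousAt C g w₀) (hCcl : IsClosed C)
    (hCadd : ∀ x ∈ C, ∀ y ∈ C, x + y ∈ C) (hw₀ : w₀ ∈ closure {w | g w ⊆ C}) :
    g w₀ ⊆ C := by
  intro z hz
  rw [← hCcl.closure_eq]
  refine mem_closure_of_forall_mem_add_nhds_zero fun U hU => ?_
  obtain ⟨w, hzw, hwC⟩ := ((hg U hU).and_frequently (mem_closure_iff_frequently.1 hw₀)).exists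
  obtain ⟨_, ⟨a, ha, u, hu, rfl⟩, c, hc, rfl⟩ := hzw hz
  exact ⟨a + c, hCadd a (hwC ha) c hc, u, hu, add_right_comm a c u⟩

theorem isClosed_setOf_subset_of_lowerContinuousAt {W Z : Type*} [TopologicalSpace W]
    [AddCommGroup Z] [TopologicalSpace Z] [IsTopologicalAddGroup Z] {C : Set Z}
    {g : W → Set Z} (hg : ∀ w, LowerContinuousAt C g w) (hCcl : IsClosed C)
    (hCadd : ∀ x ∈ C, ∀ y ∈ C, x + y ∈ C) : IsClosed {w : W | g w ⊆ C} :=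
  isClosed_of_closure_subset fun w hw => (hg w).subset_of_mem_closure hCcl hCadd hw

theorem stmt_11_general {W Z : Type*} [TopologicalSpace W]
    [AddCommGroup Z] [Module ℝ Z] [TopologicalSpace Z] [IsTopologicalAddGroup Z]
    -- `C` is a closed convex cone in `Z`
    (C : Set Z) (hCcl : IsClosed C) (hCcv : Convex ℝ C)
    (hCcone : ∀ r : ℝ, 0 < r → ∀ c ∈ C, r • c ∈ C)
    (g : W → Set Z)
    -- `g` is lower `(-C)`-continuous at every point of `W`
    (hglc : ∀ w₀ : W, ∀ U ∈ nhds (0 : Z), ∃ V ∈ nhds w₀,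
      ∀ w ∈ V, g w₀ ⊆ g w + U + C) :
    IsClosed {w : W | g w ⊆ C} :=
  isClosed_setOf_subset_of_lowerContinuousAt
    (fun w₀ U hU => eventually_iff_exists_mem.2 (hglc w₀ U hU)) hCcl
    (fun _ hx _ hy => hCcv.add_mem_of_smul_mem hCcone hx hy)

/-- if `g` is lower `(-C)`-continuous at every point, then
`{w : g w ⊆ C}` is closed. -/
theorem stmt_11 {W Z : Type*} [TopologicalSpace W]
    [AddCommGroup Z] [Module ℝ Z] [TopologicalSpace Z] [IsTopologicalAddGroup Z]
    [ContinuousSMul ℝ Z]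
    -- `C` is a closed convex cone in `Z`
    (C : Set Z) (hCcl : IsClosed C) (hCcv : Convex ℝ C)
    (hCcone : ∀ r : ℝ, 0 < r → ∀ c ∈ C, r • c ∈ C)
    (g : W → Set Z) (hgne : ∀ w, (g w).Nonempty)
    -- `g` is lower `(-C)`-continuous at every point of `W`
    (hglc : ∀ w₀ : W, ∀ U ∈ nhds (0 : Z), ∃ V ∈ nhds w₀,
      ∀ w ∈ V, g w₀ ⊆ g w + U + C) :
    IsClosed {w : W | g w ⊆ C} :=
  stmt_11_general C hCcl hCcv hCcone g hglc
end

section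
/- Let X be a topological space, Y a nonempty subset of a locally convex topological vector space E, and T : X → 2^Y a correspondence. Let ß be a basis of neighborhoods of 0 in E consisting of open absolutely convex symmetric sets, and let D be a compact subset of Y. For each V ∈ ß define T^V : X → 2^Y by T^V(x) = (T(x) + V) ∩ D. Then ∩_{V ∈ ß} \bar{T^V}(x) ⊆ \bar T(x) for every x ∈ X. -/
open Pointwise Set Topology

/-- The correspondence `\bar T`: `y ∈ \bar T x` iff `(x, y)` lies in the closure of the
graph of `T` in `X × E`. -/
def GraphCl' {X E : Type*} [TopologicalSpace X] [TopologicalSpace E]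
    (T : X → Set E) (x : X) : Set E :=
  {y : E | (x, y) ∈ closure {p : X × E | p.2 ∈ T p.1}}

/-!
Cutting `T(x) + V` down to `D` only shrinks the graph, so it suffices to show that a point
`(x, y)` adherent to the graph of every enlargement `T + V` is adherent to the graph of `T`.
Given a neighbourhood `U × W` of `(x, y)`, continuity of subtraction yields neighbourhoods
`B ∋ y` and `V ∋ 0` with `B - V ⊆ W`; a point `(a, t + v)` of the graph of `T + V` in `U × B`
then gives the point `(a, t)` of the graph of `T` in `U × W`.
-/

section

variable {X E : Type*} [TopologicalSpace X] [TopologicalSpace E]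

theorem graphCl'_mono {T S : X → Set E} (h : ∀ z, T z ⊆ S z) (x : X) :
    GraphCl' T x ⊆ GraphCl' S x :=
  fun _ hy => closure_mono (fun p hp => h p.1 hp) hy

theorem mem_graphCl'_of_forall_nhds_zero [AddGroup E] [IsTopologicalAddGroup E]
    {T : X → Set E} {x : X} {y : E}
    (h : ∀ V ∈ 𝓝 (0 : E), y ∈ GraphCl' (fun z => T z + V) x) : y ∈ GraphCl' T x := by
  refine mem_closure_iff_nhds.2 fun N hN => ?_
  obtain ⟨U, hU, W, hW, hUW⟩ := mem_nhds_prod_iff.1 hN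
  have hsub : (fun q : E × E => q.1 - q.2) ⁻¹' W ∈ 𝓝 (y, 0) :=
    continuous_sub.continuousAt.preimage_mem_nhds (by simpa using hW)
  obtain ⟨B, hB, V, hV, hBV⟩ := mem_nhds_prod_iff.1 hsub
  obtain ⟨⟨a, _⟩, ⟨ha, hb⟩, t, ht, v, hv, rfl⟩ :=
    mem_closure_iff_nhds.1 (h V hV) _ (prod_mem_nhds hU hB)
  exact ⟨(a, t), hUW ⟨ha, by simpa using hBV (mk_mem_prod hb hv)⟩, ht⟩

end

theorem stmt_13_general {X E : Type*} [TopologicalSpace X]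
    [AddCommGroup E] [TopologicalSpace E] [IsTopologicalAddGroup E]
    (T : X → Set E)
    -- `Bas` is a basis of neighbourhoods of `0` consisting of open absolutely convex
    -- symmetric sets
    (Bas : Set (Set E)) (hbasis : (nhds (0 : E)).HasBasis (· ∈ Bas) id)
    (D : Set E)
    (x : X) :
    (⋂ V ∈ Bas, GraphCl' (fun z => (T z + V) ∩ D) x) ⊆ GraphCl' T x := by
  intro y hy
  refine mem_graphCl'_of_forall_nhds_zero fun W hW => ?_
  obtain ⟨V, hV, hVW⟩ := hbasis.mem_iff.1 hW
  exact graphCl'_mono (fun z => inter_subset_left.trans (add_subset_add_left hVW)) x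
    (mem_iInter₂.1 hy V hV)

/-- Lemma 2: `⋂_{V ∈ Bas} \bar{T^V}(x) ⊆ \bar T(x)`, where
`T^V(x) = (T(x) + V) ∩ D`. -/
theorem stmt_13 {X E : Type*} [TopologicalSpace X]
    [AddCommGroup E] [Module ℝ E] [TopologicalSpace E] [IsTopologicalAddGroup E]
    [ContinuousSMul ℝ E] [LocallyConvexSpace ℝ E]
    (Y : Set E) (hYne : Y.Nonempty)
    (T : X → Set E) (hTY : ∀ x, T x ⊆ Y)
    -- `Bas` is a basis of neighbourhoods of `0` consisting of open absolutely convex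
    -- symmetric sets
    (Bas : Set (Set E)) (hbasis : (nhds (0 : E)).HasBasis (· ∈ Bas) id)
    (hBas : ∀ V ∈ Bas, IsOpen V ∧ Convex ℝ V ∧ Balanced ℝ V ∧ V = -V)
    (D : Set E) (hDY : D ⊆ Y) (hDcp : IsCompact D)
    (x : X) :
    (⋂ V ∈ Bas, GraphCl' (fun z => (T z + V) ∩ D) x) ⊆ GraphCl' T x :=
  stmt_13_general T Bas hbasis D x
end

section
/- Let E be a Hausdorff topological vector space, let L ⊆ E be a simplex, i.e. the convex hull of a finite affinely independent set {a₁, …, a_n}, and let Y be a convex subset of a topological vector space. If M : L → 2^Y has weakly convex graph, then M admits a continuous selection: there is a continuous map h : L → Y with h(x) ∈ M(x) for every x ∈ L. In particular, one may take h(∑_{i=1}^n λ_i a_i) = ∑_{i=1}^n λ_i c_i, where c_i ∈ M(a_i) are the points provided by the weakly convex graph property and (λ₁,…,λ_n) are the barycentric coordinates on L. -/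
/-!
Let `c i ∈ M (a i)` be the points given by the weakly convex graph property at the vertices.
Since `a` is affinely independent, `λ ↦ ∑ λ i • a i` is a continuous injection of the compact
standard simplex onto `L`, hence (`E` being Hausdorff) a homeomorphism onto `L`. Transporting the
continuous map `λ ↦ ∑ λ i • c i` along it gives the selection `h`, and `h x ∈ M x` is exactly the
weakly convex graph property.
-/

open Set

section Barycentric

variable {R E ι : Type*} [Field R] [AddCommGroup E] [Module R E] [Fintype ι]

theorem AffineIndependent.injOn_sum_smul {a : ι → E} (ha : AffineIndependent R a) :
    InjOn (fun w : ι → R => ∑ i, w i • a i) {w | ∑ i, w i = 1} := by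
  intro w₁ hw₁ w₂ hw₂ hw
  refine (affineIndependent_iff_eq_of_fintype_affineCombination_eq R a).mp ha _ _ hw₁ hw₂ ?_
  rwa [Finset.affineCombination_eq_linear_combination _ _ _ hw₁,
    Finset.affineCombination_eq_linear_combination _ _ _ hw₂]

variable [LinearOrder R] [IsStrictOrderedRing R]

theorem convexHull_range_eq_image_stdSimplex (a : ι → E) :
    convexHull R (range a) = (fun w : ι → R => ∑ i, w i • a i) '' stdSimplex R ι := by
  classical
  have hcomb : (fun w : ι → R => ∑ i, w i • a i) = Fintype.linearCombination R a :=
    funext fun w => (Fintype.linearCombination_apply R a w).symm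
  rw [hcomb, ← convexHull_rangle_single_eq_stdSimplex, LinearMap.image_convexHull,
    ← range_comp]
  congr 2
  funext i
  simp

end Barycentric

section Topological

variable {E ι : Type*} [AddCommGroup E] [Module ℝ E] [TopologicalSpace E] [ContinuousAdd E]
  [ContinuousSMul ℝ E] [Fintype ι]

theorem continuous_sum_smul_stdSimplex (a : ι → E) :
    Continuous fun w : stdSimplex ℝ ι => ∑ i, (w : ι → ℝ) i • a i :=
  (by fun_prop : Continuous fun w : ι → ℝ => ∑ i, w i • a i).comp continuous_subtype_val

theorem AffineIndependent.isEmbedding_sum_smul_stdSimplex [T2Space E] {a : ι → E}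
    (ha : AffineIndependent ℝ a) :
    Topology.IsEmbedding fun w : stdSimplex ℝ ι => ∑ i, (w : ι → ℝ) i • a i :=
  have : CompactSpace (stdSimplex ℝ ι) := isCompact_iff_compactSpace.mp (isCompact_stdSimplex _ _)
  ((continuous_sum_smul_stdSimplex a).isClosedEmbedding
    (ha.injOn_sum_smul.mono fun _ hw => hw.2).injective).isEmbedding

end Topological

theorem Topology.IsEmbedding.continuousOn_extend_range {X E F : Type*} [TopologicalSpace X]
    [TopologicalSpace E] [TopologicalSpace F] {g : X → E} (hg : IsEmbedding g) {φ : X → F}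
    (hφ : Continuous φ) (e : E → F) : ContinuousOn (Function.extend g φ e) (range g) := by
  rw [← image_univ, hg.isInducing.continuousOn_image_iff, Function.extend_comp hg.injective]
  exact hφ.continuousOn

theorem stmt_18_general {E F : Type*}
    [AddCommGroup E] [Module ℝ E] [TopologicalSpace E] [IsTopologicalAddGroup E]
    [ContinuousSMul ℝ E] [T2Space E]
    [AddCommGroup F] [Module ℝ F] [TopologicalSpace F] [IsTopologicalAddGroup F]
    [ContinuousSMul ℝ F]
    -- `L` is a simplex: the convex hull of a finite affinely independent set
    (n : ℕ) (a : Fin n → E) (ha : AffineIndependent ℝ a)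
    (L : Set E) (hL : L = convexHull ℝ (range a))
    (M : E → Set F)
    (hM : WeaklyConvexGraphOn M L) :
    ∃ c : Fin n → F, (∀ i, c i ∈ M (a i)) ∧
      (∀ lam ∈ stdSimplex ℝ (Fin n), (∑ i, lam i • c i) ∈ M (∑ i, lam i • a i)) ∧
      ∃ h : E → F, ContinuousOn h L ∧ (∀ x ∈ L, h x ∈ M x) ∧
        ∀ lam ∈ stdSimplex ℝ (Fin n), h (∑ i, lam i • a i) = ∑ i, lam i • c i := by
  obtain ⟨c, hc, hcM⟩ := hM n a fun i => hL ▸ subset_convexHull ℝ _ (mem_range_self i)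
  refine ⟨c, hc, hcM, ?_⟩
  set g := fun w : stdSimplex ℝ (Fin n) => ∑ i, (w : Fin n → ℝ) i • a i
  set φ := fun w : stdSimplex ℝ (Fin n) => ∑ i, (w : Fin n → ℝ) i • c i
  have hg : Topology.IsEmbedding g := ha.isEmbedding_sum_smul_stdSimplex
  have hLg : L = range g := by
    rw [hL, convexHull_range_eq_image_stdSimplex, image_eq_range]
    rfl
  refine ⟨Function.extend g φ 0,
    hLg ▸ hg.continuousOn_extend_range (continuous_sum_smul_stdSimplex c) 0, ?_,
    fun w hw => hg.injective.extend_apply φ 0 ⟨w, hw⟩⟩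
  rw [hLg]
  rintro _ ⟨w, rfl⟩
  rw [hg.injective.extend_apply]
  exact hcM w w.2

/-- a correspondence with weakly convex graph on a simplex admits a
continuous selection, which can be taken affine in the barycentric coordinates. -/
theorem stmt_18 {E F : Type*}
    [AddCommGroup E] [Module ℝ E] [TopologicalSpace E] [IsTopologicalAddGroup E]
    [ContinuousSMul ℝ E] [T2Space E]
    [AddCommGroup F] [Module ℝ F] [TopologicalSpace F] [IsTopologicalAddGroup F]
    [ContinuousSMul ℝ F]
    -- `L` is a simplex: the convex hull of a finite affinely independent set
    (n : ℕ) (hn : 0 < n) (a : Fin n → E) (ha : AffineIndependent ℝ a)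
    (L : Set E) (hL : L = convexHull ℝ (range a))
    (Y : Set F) (hYcv : Convex ℝ Y)
    (M : E → Set F) (hMY : ∀ x ∈ L, M x ⊆ Y)
    (hM : WeaklyConvexGraphOn M L) :
    ∃ c : Fin n → F, (∀ i, c i ∈ M (a i)) ∧
      (∀ lam ∈ stdSimplex ℝ (Fin n), (∑ i, lam i • c i) ∈ M (∑ i, lam i • a i)) ∧
      ∃ h : E → F, ContinuousOn h L ∧ (∀ x ∈ L, h x ∈ M x) ∧
        ∀ lam ∈ stdSimplex ℝ (Fin n), h (∑ i, lam i • a i) = ∑ i, lam i • c i :=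
  stmt_18_general n a ha L hL M hM
end
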